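/- arXiv:2512.08377 — 2 statements merged into one kernel-verified Lean document; each statement's English description precedes it below -/
import Mathlib

section
/- For all positive integers p: K(2p, 2p; 4p-1) = (-1)^p C(2p-1,p), K(2p, 2p; 4p) = 2·(-1)^p C(2p-1,p), K(2p, 2p; 4p+1) = 2·(-1)^p C(2p-1,p), and (p+1) K(2p, 2p; 4p+2) = 2·(-1)^p C(2p-1,p). -/
open Polynomial
open Finset

lemma coeff_one_sub_X_pow (m k : ℕ) : ((1 - X : ℤ[X])^m).coeff k = (-1)^k * m.choose k := by
  have h : (1 - X : ℤ[X])^m = ∑ i ∈ range (m+1), C ((-1 : ℤ)^i * (m.choose i : ℤ)) * X ^ i := by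
    rw [sub_eq_add_neg, add_comm, add_pow]
    refine Finset.sum_congr rfl fun i _ => ?_
    rw [neg_pow, one_pow, mul_one]
    simp [map_mul, map_pow, C_eq_natCast]
    ring
  rw [h, finset_sum_coeff]
  simp only [coeff_C_mul, coeff_X_pow]
  rcases le_or_gt k m with hk | hk
  · rw [Finset.sum_eq_single k]
    · simp
    · intro b _ hb; rw [if_neg fun (h : k = b) => hb h.symm, mul_zero]
    · intro h'; simp at h'; omega
  · rw [Finset.sum_eq_zero, Nat.choose_eq_zero_of_lt hk]
    · simp
    · intro b hb; simp at hb
      have hkb : ¬ k = b := by omega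
      rw [if_neg hkb, mul_zero]

/-- The Kravchuk polynomial `K(a, b; n)`: the coefficient of `z^a` in
`(1+z)^(n-b) * (1-z)^b`. -/
noncomputable def kravchuk (a b n : ℕ) : ℤ :=
  ((1 + X : ℤ[X]) ^ (n - b) * (1 - X) ^ b).coeff a

lemma coeff_Q (m k : ℕ) :
    ((1 - X^2 : ℤ[X])^m).coeff k = if 2 ∣ k then (-1 : ℤ)^(k/2) * (m.choose (k/2) : ℤ) else 0 := by
  have h : (1 - X^2 : ℤ[X])^m = expand ℤ 2 ((1 - X)^m) := by
    rw [map_pow, map_sub, map_one, expand_X]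
  rw [h, coeff_expand (by norm_num)]
  split <;> simp [coeff_one_sub_X_pow]

lemma choose_two_mul (m : ℕ) :
    (2*m+2).choose (m+1) = 2 * (2*m+1).choose (m+1) := by
  have h1 : (2*m+2).choose (m+1) = (2*m+1).choose m + (2*m+1).choose (m+1) :=
    Nat.choose_succ_succ' _ _ ▸ rfl
  have h2 : (2*m+1).choose (m+1) = (2*m+1).choose m := by
    rw [← Nat.choose_symm (by omega)]
    congr 1; omega
  omega

theorem stmt_6 (p : ℕ) (hp : 0 < p) :
    kravchuk (2 * p) (2 * p) (4 * p - 1) = (-1) ^ p * ((2 * p - 1).choose p) ∧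
    kravchuk (2 * p) (2 * p) (4 * p) = 2 * (-1) ^ p * ((2 * p - 1).choose p) ∧
    kravchuk (2 * p) (2 * p) (4 * p + 1) = 2 * (-1) ^ p * ((2 * p - 1).choose p) ∧
    ((p : ℤ) + 1) * kravchuk (2 * p) (2 * p) (4 * p + 2) =
      2 * (-1) ^ p * ((2 * p - 1).choose p) := by
  obtain ⟨m, rfl⟩ : ∃ m, p = m + 1 := ⟨p - 1, by omega⟩
  set Q : ℤ[X] := (1 - X^2) ^ (2*(m+1)) with hQ
  have hmp : ∀ k : ℕ, (1 + X : ℤ[X])^k * (1 - X)^k = (1 - X^2)^k := by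
    intro k; rw [← mul_pow]; congr 1; ring
  have hQc : ∀ k, Q.coeff k =
      if 2 ∣ k then (-1 : ℤ)^(k/2) * (((2*(m+1)).choose (k/2)) : ℤ) else 0 :=
    fun k => coeff_Q _ k
  have hch : (((2*(m+1)).choose (m+1)) : ℤ) = 2 * (((2*m+1).choose (m+1)) : ℤ) := by
    rw [show 2*(m+1) = 2*m+2 from by ring, choose_two_mul]; push_cast; ring
  have e1 : 2 * (m + 1) - 1 = 2 * m + 1 := by omega
  have h2 : 2*(m+1)/2 = m+1 := by omega
  refine ⟨?_, ?_, ?_, ?_⟩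
  · -- n = 4p-1, exponent 2m+1
    have hn : 4 * (m+1) - 1 - 2 * (m+1) = 2*m+1 := by omega
    rw [kravchuk, hn]
    have hpoly : (1 + X : ℤ[X]) ^ (2*m+1) * (1 - X) ^ (2 * (m+1)) =
        (1 - X^2)^(2*m+1) * (1 - X) := by
      rw [show 2*(m+1) = (2*m+1)+1 from by omega, pow_succ (1 - X : ℤ[X]) (2*m+1),
        ← mul_assoc, hmp]
    rw [hpoly, mul_sub, mul_one, coeff_sub]
    have hc2 : ((1 - X^2 : ℤ[X])^(2*m+1) * X).coeff (2*(m+1)) = 0 := by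
      rw [show 2*(m+1) = (2*m+1)+1 from by omega, coeff_mul_X, coeff_Q, if_neg (by omega)]
    rw [hc2, coeff_Q, if_pos (by omega), sub_zero, e1, h2]
  · -- n = 4p
    have hn : 4 * (m+1) - 2 * (m+1) = 2*(m+1) := by omega
    rw [kravchuk, hn, hmp, ← hQ, hQc, if_pos (by omega), h2, e1, hch]
    ring
  · -- n = 4p+1, exponent 2m+3
    have hn : 4 * (m+1) + 1 - 2 * (m+1) = 2*m+3 := by omega
    rw [kravchuk, hn]
    have hpoly : (1 + X : ℤ[X]) ^ (2*m+3) * (1 - X) ^ (2 * (m+1)) = Q * (1 + X) := by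
      rw [show 2*m+3 = 2*(m+1)+1 from by omega, pow_succ, mul_right_comm, hmp, hQ]
    rw [hpoly, mul_add, mul_one, coeff_add]
    have hc2 : (Q * X).coeff (2*(m+1)) = 0 := by
      rw [show 2*(m+1) = (2*m+1)+1 from by omega, coeff_mul_X, hQc, if_neg (by omega)]
    rw [hc2, hQc, if_pos (by omega), add_zero, h2, e1, hch]
    ring
  · -- n = 4p+2, exponent 2m+4
    have hn : 4 * (m+1) + 2 - 2 * (m+1) = 2*m+4 := by omega
    rw [kravchuk, hn]
    have hpoly : (1 + X : ℤ[X]) ^ (2*m+4) * (1 - X) ^ (2 * (m+1)) =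
        Q + (Q * X + Q * X) + Q * X^2 := by
      rw [show 2*m+4 = 2*(m+1)+2 from by omega, pow_add, mul_right_comm, hmp, hQ]
      ring
    rw [hpoly, coeff_add, coeff_add, coeff_add]
    have hc1 : (Q * X).coeff (2*(m+1)) = 0 := by
      rw [show 2*(m+1) = (2*m+1)+1 from by omega, coeff_mul_X, hQc, if_neg (by omega)]
    have hc2 : (Q * X^2).coeff (2*(m+1)) = Q.coeff (2*m) := by
      rw [show 2*(m+1) = 2*m + 2 from by omega, coeff_mul_X_pow]
    rw [hc1, hc2, hQc, hQc, if_pos (by omega), if_pos (by omega), h2, e1,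
      show 2*m/2 = m from by omega]
    have key : (((2*(m+1)).choose (m+1)) : ℤ) * (m+1) = (((2*(m+1)).choose m) : ℤ) * (m+2) := by
      have h' := Nat.choose_succ_right_eq (2*(m+1)) m
      rw [show 2*(m+1)-m = m+2 from by omega] at h'
      exact_mod_cast congrArg (Nat.cast : ℕ → ℤ) h'
    push_cast
    linear_combination (-(-1:ℤ)^m) * key + (-(-1:ℤ)^m) * hch
end

section
/- Fix integers a and b and a residue α ∈ {0,1,2,3}. Then there exists a rational function g(p) (a quotient of two polynomials with rational coefficients, the denominator nonvanishing for all sufficiently large p) such that for all sufficiently large positive integers p, K(a+2p, b+2p; 4p+α-1) = (-1)^p C(2p-1, p) g(p). -/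
/-!
Put `B = b + 2p` and `n = 4p + α - 1`. Both `n - B = 2p + (α - 1 - b)` and `B = 2p + b` exceed
`2p + m`, where `m = min (α - 1 - b) b`, by amounts independent of `p`; hence
`(1+z)^(n-B) (1-z)^B = (1-z²)^(2p+m) G(z)` with `G` independent of `p`. The coefficient of
`z^(a+2p)` is then a fixed linear combination of the numbers `(-1)^(p+k) C(2p+m, p+k)`, and each
of these is `(-1)^p C(2p-1, p)` times a rational function of `p`: shifting `m` or `k` by one
multiplies a binomial coefficient by a ratio of two linear polynomials in `p`.
-/

open Polynomial Filter

def IsRationalMultiple (w f : ℕ → ℚ) : Prop :=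
  ∃ P Q : ℚ[X], ∀ᶠ p : ℕ in atTop,
    Q.eval (p : ℚ) ≠ 0 ∧ f p * Q.eval (p : ℚ) = w p * P.eval (p : ℚ)

namespace IsRationalMultiple

variable {w f g : ℕ → ℚ}

theorem refl (w : ℕ → ℚ) : IsRationalMultiple w w :=
  ⟨1, 1, Eventually.of_forall fun _ => by simp⟩

theorem zero : IsRationalMultiple w fun _ => 0 :=
  ⟨0, 1, Eventually.of_forall fun _ => by simp⟩

theorem add (hf : IsRationalMultiple w f) (hg : IsRationalMultiple w g) :
    IsRationalMultiple w (f + g) := by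
  obtain ⟨P₁, Q₁, h₁⟩ := hf
  obtain ⟨P₂, Q₂, h₂⟩ := hg
  refine ⟨P₁ * Q₂ + P₂ * Q₁, Q₁ * Q₂, (h₁.and h₂).mono fun p ⟨⟨hQ₁, e₁⟩, hQ₂, e₂⟩ => ?_⟩
  simp only [eval_mul, eval_add, Pi.add_apply]
  exact ⟨mul_ne_zero hQ₁ hQ₂,
    by linear_combination Q₂.eval (p : ℚ) * e₁ + Q₁.eval (p : ℚ) * e₂⟩

theorem const_mul (c : ℚ) (hf : IsRationalMultiple w f) :
    IsRationalMultiple w (fun p => c * f p) := by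
  obtain ⟨P, Q, h⟩ := hf
  refine ⟨C c * P, Q, h.mono fun p ⟨hQ, e⟩ => ⟨hQ, ?_⟩⟩
  simp only [eval_mul, eval_C]
  linear_combination c * e

theorem mul_left (s : ℕ → ℚ) (hf : IsRationalMultiple w f) :
    IsRationalMultiple (fun p => s p * w p) (fun p => s p * f p) := by
  obtain ⟨P, Q, h⟩ := hf
  exact ⟨P, Q, h.mono fun p ⟨hQ, e⟩ => ⟨hQ, by linear_combination s p * e⟩⟩

theorem sum {ι : Type*} (s : Finset ι) {F : ι → ℕ → ℚ}
    (h : ∀ i ∈ s, IsRationalMultiple w (F i)) :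
    IsRationalMultiple w (fun p => ∑ i ∈ s, F i p) := by
  classical
  induction s using Finset.induction_on with
  | empty => simpa using zero
  | insert i s hi ih =>
    simp only [Finset.sum_insert hi]
    exact (h i (Finset.mem_insert_self i s)).add
      (ih fun j hj => h j (Finset.mem_insert_of_mem hj))

theorem congr (hf : IsRationalMultiple w f) (h : f =ᶠ[atTop] g) : IsRationalMultiple w g := by
  obtain ⟨P, Q, hPQ⟩ := hf
  exact ⟨P, Q, (hPQ.and h).mono fun p ⟨⟨hQ, e⟩, hfg⟩ => ⟨hQ, hfg ▸ e⟩⟩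

theorem trans (hf : IsRationalMultiple g f) (hg : IsRationalMultiple w g) :
    IsRationalMultiple w f := by
  obtain ⟨P₁, Q₁, h₁⟩ := hf
  obtain ⟨P₂, Q₂, h₂⟩ := hg
  refine ⟨P₁ * P₂, Q₁ * Q₂, (h₁.and h₂).mono fun p ⟨⟨hQ₁, e₁⟩, hQ₂, e₂⟩ => ?_⟩
  simp only [eval_mul]
  exact ⟨mul_ne_zero hQ₁ hQ₂,
    by linear_combination Q₂.eval (p : ℚ) * e₁ + P₁.eval (p : ℚ) * e₂⟩

theorem of_mul_eq_mul {P Q : ℚ[X]} (h : ∀ᶠ p : ℕ in atTop, P.eval (p : ℚ) ≠ 0 ∧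
      Q.eval (p : ℚ) ≠ 0 ∧ f p * Q.eval (p : ℚ) = g p * P.eval (p : ℚ)) :
    IsRationalMultiple g f ∧ IsRationalMultiple f g :=
  ⟨⟨P, Q, h.mono fun _ h => ⟨h.2.1, h.2.2⟩⟩, ⟨Q, P, h.mono fun _ h => ⟨h.1, h.2.2.symm⟩⟩⟩

end IsRationalMultiple

/-- The truncations `toNat` only matter for finitely many `p`. -/
def shiftedChoose (m k : ℤ) (p : ℕ) : ℚ :=
  (2 * (p : ℤ) + m).toNat.choose ((p : ℤ) + k).toNat

theorem isRationalMultiple_shiftedChoose_succ_left (m k : ℤ) :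
    IsRationalMultiple (shiftedChoose m k) (shiftedChoose (m + 1) k) ∧
      IsRationalMultiple (shiftedChoose (m + 1) k) (shiftedChoose m k) := by
  refine IsRationalMultiple.of_mul_eq_mul (P := C 2 * X + C ((m : ℚ) + 1))
    (Q := X + C ((m : ℚ) + 1 - k)) ?_
  filter_upwards [eventually_ge_atTop (m.natAbs + k.natAbs + 1)] with p hp
  obtain ⟨n, hn⟩ : ∃ n : ℕ, (n : ℤ) = 2 * p + m := ⟨_, Int.toNat_of_nonneg (by omega)⟩
  obtain ⟨r, hr⟩ : ∃ r : ℕ, (r : ℤ) = p + k := ⟨_, Int.toNat_of_nonneg (by omega)⟩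
  have hP : ((n + 1 : ℕ) : ℚ) = 2 * p + (m + 1) := by
    exact_mod_cast (by omega : ((n + 1 : ℕ) : ℤ) = 2 * p + (m + 1))
  have hQ : ((n + 1 - r : ℕ) : ℚ) = p + (m + 1 - k) := by
    exact_mod_cast (by omega : ((n + 1 - r : ℕ) : ℤ) = p + (m + 1 - k))
  simp only [shiftedChoose, eval_add, eval_mul, eval_C, eval_X, ← hP, ← hQ,
    show (2 * (p : ℤ) + (m + 1)).toNat = n + 1 by omega,
    show (2 * (p : ℤ) + m).toNat = n by omega, show ((p : ℤ) + k).toNat = r by omega]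
  refine ⟨by positivity, by rw [Nat.cast_ne_zero]; omega, ?_⟩
  exact_mod_cast (Nat.choose_mul_succ_eq n r).symm

theorem isRationalMultiple_shiftedChoose_succ_right (m k : ℤ) :
    IsRationalMultiple (shiftedChoose m k) (shiftedChoose m (k + 1)) ∧
      IsRationalMultiple (shiftedChoose m (k + 1)) (shiftedChoose m k) := by
  refine IsRationalMultiple.of_mul_eq_mul (P := X + C ((m : ℚ) - k))
    (Q := X + C ((k : ℚ) + 1)) ?_
  filter_upwards [eventually_ge_atTop (m.natAbs + k.natAbs + 1)] with p hp
  obtain ⟨n, hn⟩ : ∃ n : ℕ, (n : ℤ) = 2 * p + m := ⟨_, Int.toNat_of_nonneg (by omega)⟩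
  obtain ⟨r, hr⟩ : ∃ r : ℕ, (r : ℤ) = p + k := ⟨_, Int.toNat_of_nonneg (by omega)⟩
  have hP : ((n - r : ℕ) : ℚ) = p + (m - k) := by
    exact_mod_cast (by omega : ((n - r : ℕ) : ℤ) = p + (m - k))
  have hQ : ((r + 1 : ℕ) : ℚ) = p + (k + 1) := by
    exact_mod_cast (by omega : ((r + 1 : ℕ) : ℤ) = p + (k + 1))
  simp only [shiftedChoose, eval_add, eval_C, eval_X, ← hP, ← hQ,
    show (2 * (p : ℤ) + m).toNat = n by omega, show ((p : ℤ) + k).toNat = r by omega,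
    show ((p : ℤ) + (k + 1)).toNat = r + 1 by omega]
  refine ⟨by rw [Nat.cast_ne_zero]; omega, by positivity, ?_⟩
  exact_mod_cast Nat.choose_succ_right_eq n r

theorem isRationalMultiple_shiftedChoose (m k : ℤ) :
    IsRationalMultiple (fun p => ((2 * p - 1).choose p : ℚ)) (shiftedChoose m k) := by
  have base :
      IsRationalMultiple (fun p => ((2 * p - 1).choose p : ℚ)) (shiftedChoose (-1) 0) :=
    (IsRationalMultiple.refl _).congr (Eventually.of_forall fun p => by
      simp only [shiftedChoose, show (2 * (p : ℤ) + -1).toNat = 2 * p - 1 by omega,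
        show ((p : ℤ) + 0).toNat = p by omega])
  have k_zero :
      ∀ m : ℤ, IsRationalMultiple (fun p => ((2 * p - 1).choose p : ℚ)) (shiftedChoose m 0) := by
    intro m
    induction m using Int.inductionOn' with
    | b => exact -1
    | zero => exact base
    | succ m _ ih => exact (isRationalMultiple_shiftedChoose_succ_left m 0).1.trans ih
    | pred m _ ih =>
      have step := (isRationalMultiple_shiftedChoose_succ_left (m - 1) 0).2
      rw [sub_add_cancel] at step
      exact step.trans ih
  induction k using Int.inductionOn' with
  | b => exact 0
  | zero => exact k_zero m
  | succ k _ ih => exact (isRationalMultiple_shiftedChoose_succ_right m k).1.trans ih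
  | pred k _ ih =>
    have step := (isRationalMultiple_shiftedChoose_succ_right m (k - 1)).2
    rw [sub_add_cancel] at step
    exact step.trans ih

theorem coeff_one_sub_X_pow_s9 {R : Type*} [CommRing R] (M c : ℕ) :
    ((1 - X : R[X]) ^ M).coeff c = (-1) ^ c * M.choose c := by
  have h : (1 - X : R[X]) ^ M = ((1 + X) ^ M).comp (C (-1) * X) := by simp [sub_eq_add_neg]
  rw [h, comp_C_mul_X_coeff, coeff_one_add_X_pow, mul_comm]

theorem coeff_one_sub_X_sq_pow {R : Type*} [CommRing R] (M e : ℕ) :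
    ((1 - X ^ 2 : R[X]) ^ M).coeff e =
      if 2 ∣ e then (-1 : R) ^ (e / 2) * M.choose (e / 2) else 0 := by
  have h : (1 - X ^ 2 : R[X]) ^ M = expand R 2 ((1 - X) ^ M) := by simp
  rw [h, coeff_expand two_pos]
  split_ifs <;> simp [coeff_one_sub_X_pow_s9]

theorem coeff_mul_eq_sum_range {R : Type*} [Semiring R] (H G : R[X]) {D n : ℕ}
    (hG : G.natDegree < D) (hn : D ≤ n) :
    (H * G).coeff n = ∑ j ∈ Finset.range D, H.coeff (n - j) * G.coeff j := by
  conv_lhs => rw [G.as_sum_range' D hG, Finset.mul_sum]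
  rw [finsetSum_coeff]
  refine Finset.sum_congr rfl fun j hj => ?_
  obtain ⟨i, rfl⟩ : ∃ i, n = i + j := ⟨n - j, by have := Finset.mem_range.1 hj; omega⟩
  rw [← C_mul_X_pow_eq_monomial, ← mul_assoc, coeff_mul_X_pow, coeff_mul_C, Nat.add_sub_cancel]

theorem isRationalMultiple_coeff_one_sub_X_sq_pow (m c : ℤ) :
    IsRationalMultiple (fun p => (-1) ^ p * ((2 * p - 1).choose p : ℚ))
      (fun p => (((1 - X ^ 2 : ℤ[X]) ^ (2 * (p : ℤ) + m).toNat).coeff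
        (2 * (p : ℤ) + c).toNat : ℚ)) := by
  obtain ⟨k, rfl | rfl⟩ := Int.even_or_odd' c
  · refine (((isRationalMultiple_shiftedChoose m k).mul_left fun p => (-1) ^ p).const_mul
      ((-1) ^ k.natAbs)).congr ?_
    filter_upwards [eventually_ge_atTop k.natAbs] with p hp
    have hdiv : (2 * (p : ℤ) + 2 * k).toNat / 2 = ((p : ℤ) + k).toNat := by omega
    have hsign : (-1 : ℚ) ^ ((p : ℤ) + k).toNat = (-1) ^ k.natAbs * (-1) ^ p := by
      rw [← pow_add, neg_one_pow_eq_pow_mod_two, neg_one_pow_eq_pow_mod_two (k.natAbs + p)]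
      congr 1
      omega
    rw [coeff_one_sub_X_sq_pow, if_pos (by omega), hdiv, shiftedChoose]
    push_cast
    rw [hsign]
    ring
  · refine IsRationalMultiple.zero.congr ?_
    filter_upwards [eventually_ge_atTop k.natAbs] with p hp
    rw [coeff_one_sub_X_sq_pow, if_neg (by omega), Int.cast_zero]

theorem isRationalMultiple_coeff_one_sub_X_sq_pow_mul (G : ℤ[X]) (m c : ℤ) :
    IsRationalMultiple (fun p => (-1) ^ p * ((2 * p - 1).choose p : ℚ))
      (fun p => (((1 - X ^ 2 : ℤ[X]) ^ (2 * (p : ℤ) + m).toNat * G).coeff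
        (2 * (p : ℤ) + c).toNat : ℚ)) := by
  refine (IsRationalMultiple.sum (Finset.range (G.natDegree + 1)) fun j _ =>
    (isRationalMultiple_coeff_one_sub_X_sq_pow m (c - j)).const_mul (G.coeff j)).congr ?_
  filter_upwards [eventually_ge_atTop (c.natAbs + G.natDegree + 1)] with p hp
  rw [coeff_mul_eq_sum_range _ _ (Nat.lt_succ_self _) (by omega), Int.cast_sum]
  refine Finset.sum_congr rfl fun j hj => ?_
  rw [Int.cast_mul, mul_comm, show (2 * (p : ℤ) + (c - j)).toNat = (2 * (p : ℤ) + c).toNat - j by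
    have := Finset.mem_range.1 hj; omega]

theorem one_add_X_pow_mul_one_sub_X_pow {R : Type*} [CommRing R] (M u v : ℕ) :
    (1 + X : R[X]) ^ (M + u) * (1 - X) ^ (M + v) =
      (1 - X ^ 2) ^ M * ((1 + X) ^ u * (1 - X) ^ v) := by
  rw [pow_add, pow_add, show (1 - X ^ 2 : R[X]) = (1 + X) * (1 - X) by ring, mul_pow]
  ring

theorem stmt_9_general (a b : ℤ) (α : ℕ) :
    ∃ P Q : Polynomial ℚ, ∃ N : ℕ, ∀ p : ℕ, N ≤ p →
      0 ≤ a + 2 * p ∧ 0 ≤ b + 2 * p ∧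
      a + 2 * p ≤ 4 * p + α - 1 ∧ b + 2 * p ≤ 4 * p + α - 1 ∧
      Q.eval (p : ℚ) ≠ 0 ∧
      (kravchuk (a + 2 * p).toNat (b + 2 * p).toNat ((4 * p + α : ℤ) - 1).toNat : ℚ) *
          Q.eval (p : ℚ) =
        (-1) ^ p * ((2 * p - 1).choose p) * P.eval (p : ℚ) := by
  set m := min ((α : ℤ) - 1 - b) b
  have hK : IsRationalMultiple (fun p => (-1) ^ p * ((2 * p - 1).choose p : ℚ))
      (fun p => (kravchuk (a + 2 * p).toNat (b + 2 * p).toNat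
        ((4 * p + α : ℤ) - 1).toNat : ℚ)) := by
    refine (isRationalMultiple_coeff_one_sub_X_sq_pow_mul
      ((1 + X) ^ ((α : ℤ) - 1 - b - m).toNat * (1 - X) ^ (b - m).toNat) m a).congr ?_
    filter_upwards [eventually_ge_atTop (a.natAbs + b.natAbs + α + 1)] with p hp
    rw [kravchuk, ← one_add_X_pow_mul_one_sub_X_pow,
      show ((4 * p + α : ℤ) - 1).toNat - (b + 2 * p).toNat
        = (2 * (p : ℤ) + m).toNat + ((α : ℤ) - 1 - b - m).toNat by omega,
      show (b + 2 * p).toNat = (2 * (p : ℤ) + m).toNat + (b - m).toNat by omega,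
      show (a + 2 * p).toNat = (2 * (p : ℤ) + a).toNat by omega]
  obtain ⟨P, Q, hPQ⟩ := hK
  obtain ⟨N, hN⟩ := eventually_atTop.1 (hPQ.and (eventually_ge_atTop (a.natAbs + b.natAbs + 1)))
  refine ⟨P, Q, N, fun p hp => ?_⟩
  obtain ⟨⟨hQ, hK⟩, hlarge⟩ := hN p hp
  exact ⟨by omega, by omega, by omega, by omega, hQ, hK⟩

/-- The Growth Theorem for Kravchuk polynomials: for fixed integers `a`, `b` and
residue `α ∈ {0,1,2,3}`, there is a rational function `P/Q` such that for all
sufficiently large `p` we have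
`K(a+2p, b+2p; 4p+α-1) = (-1)^p * C(2p-1, p) * (P(p)/Q(p))`. -/
theorem stmt_9 (a b : ℤ) (α : ℕ) (hα : α ≤ 3) :
    ∃ P Q : Polynomial ℚ, ∃ N : ℕ, ∀ p : ℕ, N ≤ p →
      0 ≤ a + 2 * p ∧ 0 ≤ b + 2 * p ∧
      a + 2 * p ≤ 4 * p + α - 1 ∧ b + 2 * p ≤ 4 * p + α - 1 ∧
      Q.eval (p : ℚ) ≠ 0 ∧
      (kravchuk (a + 2 * p).toNat (b + 2 * p).toNat ((4 * p + α : ℤ) - 1).toNat : ℚ) *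
          Q.eval (p : ℚ) =
        (-1) ^ p * ((2 * p - 1).choose p) * P.eval (p : ℚ) :=
  stmt_9_general a b α
end
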